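/- Define the transform T(s,t) = (s, 2√t) mapping a domain G ⊂ ℝ²₊ to T(G), and lift T(G) to the 3-dimensional region T̃(G) = {(s,τ,λ) ∈ ℝ³ : (s,τ) ∈ T(G), 0 < λ < τ}. Then for any p ≥ 1 and any measurable u on G, ∫_G |u|^p ds dt = (1/2) ∫_{T̃(G)} |u ∘ T⁻¹|^p ds dτ dλ, and for C¹ functions u, ∫_G (t u_t² + u_s²) ds dt = (1/2) ∫_{T̃(G)} |∇̃(u ∘ T⁻¹)|² ds dτ dλ, where ∇̃ is the full gradient in ℝ³ (in variables s, τ, λ) and u ∘ T⁻¹ is regarded as a function of (s,τ) independent of λ. -/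

import Mathlib

open MeasureTheory

/-- Partial derivative in the first (s) variable. -/
noncomputable def pds (u : ℝ × ℝ → ℝ) (p : ℝ × ℝ) : ℝ :=
  deriv (fun x => u (x, p.2)) p.1

/-- Partial derivative in the second (t) variable. -/
noncomputable def pdt (u : ℝ × ℝ → ℝ) (p : ℝ × ℝ) : ℝ :=
  deriv (fun y => u (p.1, y)) p.2

/-- The lifted region `T̃(G) = {(s,τ,λ) : (s,τ) ∈ T(G), 0 < λ < τ}`, where
`T(s,t) = (s, 2√t)`. -/
def liftedRegion (G : Set (ℝ × ℝ)) : Set (ℝ × ℝ × ℝ) :=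
  {q | (q.1, q.2.1) ∈ (fun p : ℝ × ℝ => (p.1, 2 * Real.sqrt p.2)) '' G ∧
    0 < q.2.2 ∧ q.2.2 < q.2.1}

/-- The function `u ∘ T⁻¹` regarded as a function of `(s,τ,λ)`, constant in `λ`:
`w(s,τ,λ) = u(s, τ²/4)`. -/
noncomputable def liftedFun (u : ℝ × ℝ → ℝ) : ℝ × ℝ × ℝ → ℝ :=
  fun q => u (q.1, q.2.1 ^ 2 / 4)

open scoped ENNReal

/-!
Integrating out `λ ∈ (0, τ)` turns the integral over `T̃(G)` of a function of `(s, τ)` into the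
integral over `T(G)` against the weight `τ`. Pulling back along `T` costs the Jacobian
`(√t)⁻¹`, and `τ = 2√t` there, so the two factors combine to the constant `2`. For the gradient
identity, the chain rule gives `|∇̃(u ∘ T⁻¹)|² = u_s² + (τ/2)² u_t² = u_s² + t u_t²` at `T(s, t)`.
-/

theorem setLIntegral_regionBetween_zero_comp_fst {α : Type*} [MeasurableSpace α]
    (μ : Measure α) [SFinite μ] {s : Set α} (hs : MeasurableSet s) {h : α → ℝ} (hh : Measurable h)
    {F : α → ℝ≥0∞} (hF : Measurable F) :
    ∫⁻ z in regionBetween 0 h s, F z.1 ∂μ.prod volume =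
      ∫⁻ x in s, F x * ENNReal.ofReal (h x) ∂μ := by
  rw [← withDensity_apply' _ _, ← prod_withDensity_left hF,
    volume_regionBetween_eq_lintegral measurable_zero.aemeasurable hh.aemeasurable hs,
    setLIntegral_withDensity_eq_setLIntegral_mul _ hF (by fun_prop) hs]
  simp

theorem lintegral_image_prodMap_id_eq_lintegral_abs_deriv_mul {G : Set (ℝ × ℝ)}
    (hG : MeasurableSet G) {φ φ' : ℝ → ℝ}
    (hφ : ∀ x ∈ G, HasDerivAt φ (φ' x.2) x.2) (hinj : Set.InjOn (Prod.map id φ) G)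
    (g : ℝ × ℝ → ℝ≥0∞) :
    ∫⁻ y in Prod.map id φ '' G, g y = ∫⁻ x in G, ENNReal.ofReal |φ' x.2| * g (x.1, φ x.2) := by
  have hderiv : ∀ x ∈ G, HasFDerivWithinAt (Prod.map id φ)
      ((ContinuousLinearMap.id ℝ ℝ).prodMap (ContinuousLinearMap.toSpanSingleton ℝ (φ' x.2))) G x :=
    fun x hx => ((hasFDerivAt_id x.1).prodMap x (hφ x hx).hasFDerivAt).hasFDerivWithinAt
  rw [lintegral_image_eq_lintegral_abs_det_fderiv_mul volume hG hderiv hinj g]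
  refine lintegral_congr fun x => ?_
  have hdet : ((ContinuousLinearMap.id ℝ ℝ).prodMap
      (ContinuousLinearMap.toSpanSingleton ℝ (φ' x.2))).det = φ' x.2 := by
    rw [ContinuousLinearMap.det, ContinuousLinearMap.coe_prodMap, LinearMap.det_prodMap,
      ContinuousLinearMap.coe_id, LinearMap.det_id, one_mul, ← ContinuousLinearMap.det,
      ContinuousLinearMap.det_toSpanSingleton]
  rw [hdet, Prod.map_apply, id]

theorem hasDerivAt_two_mul_sqrt {t : ℝ} (ht : 0 < t) :
    HasDerivAt (fun t => 2 * Real.sqrt t) (Real.sqrt t)⁻¹ t :=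
  ((Real.hasDerivAt_sqrt ht.ne').const_mul 2).congr_deriv (by field_simp)

theorem injOn_two_mul_sqrt : Set.InjOn (fun t => 2 * Real.sqrt t) (Set.Ici 0) := by
  intro a ha b hb h
  simpa [Real.sqrt_inj ha hb] using h

/-- The transform `T(s, t) = (s, 2√t)` of the paper. -/
noncomputable def sqrtMap : ℝ × ℝ → ℝ × ℝ := Prod.map id (fun t => 2 * Real.sqrt t)

theorem injOn_sqrtMap {G : Set (ℝ × ℝ)} (hG : G ⊆ {p : ℝ × ℝ | 0 < p.2}) :
    Set.InjOn sqrtMap G := by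
  intro x hx y hy hxy
  obtain ⟨h1, h2⟩ := Prod.ext_iff.1 hxy
  exact Prod.ext h1 (injOn_two_mul_sqrt (Set.mem_Ici.2 (hG hx).le) (Set.mem_Ici.2 (hG hy).le) h2)

theorem measurableSet_image_sqrtMap {G : Set (ℝ × ℝ)} (hG : G ⊆ {p : ℝ × ℝ | 0 < p.2})
    (hGm : MeasurableSet G) : MeasurableSet (sqrtMap '' G) :=
  hGm.image_of_continuousOn_injOn (by unfold sqrtMap; fun_prop) (injOn_sqrtMap hG)

theorem sqrtMap_apply_sq_div_four {x : ℝ × ℝ} (hx : 0 ≤ x.2) :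
    ((sqrtMap x).1, (sqrtMap x).2 ^ 2 / 4) = x := by
  have h : (2 * Real.sqrt x.2) ^ 2 / 4 = x.2 := by rw [mul_pow, Real.sq_sqrt hx]; ring
  exact Prod.ext rfl h

theorem preimage_prodAssoc_liftedRegion (G : Set (ℝ × ℝ)) :
    MeasurableEquiv.prodAssoc ⁻¹' liftedRegion G = regionBetween 0 Prod.snd (sqrtMap '' G) :=
  rfl

theorem measurableSet_liftedRegion {G : Set (ℝ × ℝ)} (hG : G ⊆ {p : ℝ × ℝ | 0 < p.2})
    (hGm : MeasurableSet G) : MeasurableSet (liftedRegion G) := by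
  rw [← MeasurableEquiv.prodAssoc.measurableSet_preimage, preimage_prodAssoc_liftedRegion]
  exact measurableSet_regionBetween measurable_zero measurable_snd
    (measurableSet_image_sqrtMap hG hGm)

theorem mem_of_mem_liftedRegion {G : Set (ℝ × ℝ)} (hG : G ⊆ {p : ℝ × ℝ | 0 < p.2})
    {q : ℝ × ℝ × ℝ} (hq : q ∈ liftedRegion G) : (q.1, q.2.1 ^ 2 / 4) ∈ G := by
  obtain ⟨⟨x, hx, hxq⟩, -⟩ := hq
  have h := sqrtMap_apply_sq_div_four (hG hx).le
  rw [show sqrtMap x = (q.1, q.2.1) from hxq] at h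
  exact h ▸ hx

theorem lintegral_liftedRegion {G : Set (ℝ × ℝ)} (hG : G ⊆ {p : ℝ × ℝ | 0 < p.2})
    (hGm : MeasurableSet G) {f : ℝ × ℝ → ℝ≥0∞} (hf : Measurable f) :
    ∫⁻ q in liftedRegion G, f (q.1, q.2.1 ^ 2 / 4) = 2 * ∫⁻ x in G, f x := by
  calc ∫⁻ q in liftedRegion G, f (q.1, q.2.1 ^ 2 / 4)
      = ∫⁻ z in regionBetween 0 Prod.snd (sqrtMap '' G), f (z.1.1, z.1.2 ^ 2 / 4)
          ∂volume.prod volume :=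
        (volume_preserving_prodAssoc.setLIntegral_comp_preimage_emb
          MeasurableEquiv.prodAssoc.measurableEmbedding _ _).symm
    _ = ∫⁻ y in sqrtMap '' G, f (y.1, y.2 ^ 2 / 4) * ENNReal.ofReal y.2 :=
        setLIntegral_regionBetween_zero_comp_fst volume (measurableSet_image_sqrtMap hG hGm)
          measurable_snd (F := fun y => f (y.1, y.2 ^ 2 / 4)) (hf.comp (by fun_prop))
    _ = ∫⁻ x in G, ENNReal.ofReal |(Real.sqrt x.2)⁻¹| *
          (f ((sqrtMap x).1, (sqrtMap x).2 ^ 2 / 4) * ENNReal.ofReal (2 * Real.sqrt x.2)) :=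
        lintegral_image_prodMap_id_eq_lintegral_abs_deriv_mul hGm
          (φ' := fun t => (Real.sqrt t)⁻¹) (fun x hx => hasDerivAt_two_mul_sqrt (hG hx))
          (injOn_sqrtMap hG)
          (fun y => f (y.1, y.2 ^ 2 / 4) * ENNReal.ofReal y.2)
    _ = ∫⁻ x in G, 2 * f x := by
        refine setLIntegral_congr_fun hGm fun x hx => ?_
        have hpos : 0 < Real.sqrt x.2 := Real.sqrt_pos.2 (hG hx)
        have h2 : (Real.sqrt x.2)⁻¹ * (2 * Real.sqrt x.2) = 2 := by field_simp
        rw [sqrtMap_apply_sq_div_four (hG hx).le, mul_left_comm,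
          ← ENNReal.ofReal_mul (by positivity), abs_of_pos (inv_pos.2 hpos), h2,
          ENNReal.ofReal_ofNat, mul_comm]
    _ = 2 * ∫⁻ x in G, f x := lintegral_const_mul 2 hf

theorem integral_liftedRegion {G : Set (ℝ × ℝ)} (hG : G ⊆ {p : ℝ × ℝ | 0 < p.2})
    (hGm : MeasurableSet G) {v : ℝ × ℝ → ℝ} (hv : Measurable v) (hv0 : ∀ x ∈ G, 0 ≤ v x) :
    ∫ q in liftedRegion G, v (q.1, q.2.1 ^ 2 / 4) = 2 * ∫ x in G, v x := by
  rw [integral_eq_lintegral_of_nonneg_ae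
      (ae_restrict_of_forall_mem (measurableSet_liftedRegion hG hGm)
        fun q hq => hv0 _ (mem_of_mem_liftedRegion hG hq))
      (hv.comp (by fun_prop)).aestronglyMeasurable,
    integral_eq_lintegral_of_nonneg_ae (ae_restrict_of_forall_mem hGm hv0)
      hv.aestronglyMeasurable,
    lintegral_liftedRegion hG hGm hv.ennreal_ofReal,
    ENNReal.toReal_mul, ENNReal.toReal_ofNat]

theorem pds_eq_fderiv {u : ℝ × ℝ → ℝ} {p : ℝ × ℝ} (hu : DifferentiableAt ℝ u p) :
    pds u p = fderiv ℝ u p (1, 0) :=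
  (hu.hasFDerivAt.comp_hasDerivAt p.1
    ((hasDerivAt_id p.1).prodMk (hasDerivAt_const p.1 p.2))).deriv

theorem pdt_eq_fderiv {u : ℝ × ℝ → ℝ} {p : ℝ × ℝ} (hu : DifferentiableAt ℝ u p) :
    pdt u p = fderiv ℝ u p (0, 1) :=
  (hu.hasFDerivAt.comp_hasDerivAt p.2
    ((hasDerivAt_const p.2 p.1).prodMk (hasDerivAt_id p.2))).deriv

theorem continuous_pds {u : ℝ × ℝ → ℝ} (hu : ContDiff ℝ 1 u) : Continuous (pds u) := by
  have h : pds u = fun p => fderiv ℝ u p (1, 0) :=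
    funext fun p => pds_eq_fderiv (hu.differentiable one_ne_zero p)
  rw [h]
  exact (hu.continuous_fderiv one_ne_zero).clm_apply continuous_const

theorem continuous_pdt {u : ℝ × ℝ → ℝ} (hu : ContDiff ℝ 1 u) : Continuous (pdt u) := by
  have h : pdt u = fun p => fderiv ℝ u p (0, 1) :=
    funext fun p => pdt_eq_fderiv (hu.differentiable one_ne_zero p)
  rw [h]
  exact (hu.continuous_fderiv one_ne_zero).clm_apply continuous_const

theorem fderiv_liftedFun_apply {u : ℝ × ℝ → ℝ} (hu : Differentiable ℝ u) (q v : ℝ × ℝ × ℝ) :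
    fderiv ℝ (liftedFun u) q v = fderiv ℝ u (q.1, q.2.1 ^ 2 / 4) (v.1, q.2.1 / 2 * v.2.1) := by
  let τ : ℝ × ℝ × ℝ →L[ℝ] ℝ :=
    (ContinuousLinearMap.fst ℝ ℝ ℝ).comp (ContinuousLinearMap.snd ℝ ℝ _)
  have hτ : HasFDerivAt (fun q : ℝ × ℝ × ℝ => q.2.1) τ q :=
    hasFDerivAt_fst.comp q hasFDerivAt_snd
  have hsq : HasDerivAt (fun t : ℝ => t ^ 2 / 4) (q.2.1 / 2) q.2.1 :=
    ((hasDerivAt_pow 2 q.2.1).div_const 4).congr_deriv (by ring)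
  have hw : HasFDerivAt (liftedFun u) ((fderiv ℝ u (q.1, q.2.1 ^ 2 / 4)).comp
      ((ContinuousLinearMap.fst ℝ ℝ _).prod ((q.2.1 / 2) • τ))) q :=
    (hu _).hasFDerivAt.comp q
      (hasFDerivAt_fst.prodMk (hsq.comp_hasFDerivAt (h₂ := fun t : ℝ => t ^ 2 / 4) q hτ))
  rw [hw.fderiv]
  rfl

theorem sum_sq_fderiv_liftedFun {u : ℝ × ℝ → ℝ} (hu : Differentiable ℝ u) (q : ℝ × ℝ × ℝ) :
    (fderiv ℝ (liftedFun u) q (1, 0, 0)) ^ 2 + (fderiv ℝ (liftedFun u) q (0, 1, 0)) ^ 2 +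
        (fderiv ℝ (liftedFun u) q (0, 0, 1)) ^ 2 =
      q.2.1 ^ 2 / 4 * pdt u (q.1, q.2.1 ^ 2 / 4) ^ 2 + pds u (q.1, q.2.1 ^ 2 / 4) ^ 2 := by
  have h01 : ((0 : ℝ), q.2.1 / 2 * 1) = (q.2.1 / 2) • ((0 : ℝ), (1 : ℝ)) := by simp
  simp only [fderiv_liftedFun_apply hu, h01, mul_zero, Prod.mk_zero_zero, Prod.fst_zero,
    map_smul, map_zero, smul_eq_mul, pds_eq_fderiv (hu _), pdt_eq_fderiv (hu _)]
  ring

/-- The raising-dimension identities: for `G ⊆ ℝ²₊` and the transform `T(s,t) = (s, 2√t)`,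
`∫_G |u|^p = ½ ∫_{T̃(G)} |u∘T⁻¹|^p` for `p ≥ 1`, and for `C¹` functions
`∫_G (t u_t² + u_s²) = ½ ∫_{T̃(G)} |∇̃(u∘T⁻¹)|²` with the full gradient in `ℝ³`. -/
theorem stmt2 (G : Set (ℝ × ℝ)) (hG : G ⊆ {p : ℝ × ℝ | 0 < p.2})
    (hGm : MeasurableSet G) (u : ℝ × ℝ → ℝ) (hu : Measurable u) :
    (∀ p : ℝ, 1 ≤ p →
      ∫ x in G, |u x| ^ p = (1 / 2) * ∫ q in liftedRegion G, |liftedFun u q| ^ p) ∧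
    (ContDiff ℝ 1 u →
      ∫ x in G, (x.2 * (pdt u x) ^ 2 + (pds u x) ^ 2) =
        (1 / 2) * ∫ q in liftedRegion G,
          ((fderiv ℝ (liftedFun u) q (1, 0, 0)) ^ 2 +
            (fderiv ℝ (liftedFun u) q (0, 1, 0)) ^ 2 +
            (fderiv ℝ (liftedFun u) q (0, 0, 1)) ^ 2)) := by
  refine ⟨fun p _ => ?_, fun hC1 => ?_⟩
  · unfold liftedFun
    rw [integral_liftedRegion hG hGm (v := fun x => |u x| ^ p) (by fun_prop)
      fun x _ => by positivity]
    ring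
  · have hv : Measurable fun x : ℝ × ℝ => x.2 * pdt u x ^ 2 + pds u x ^ 2 :=
      (continuous_snd.mul ((continuous_pdt hC1).pow 2)).add ((continuous_pds hC1).pow 2)
        |>.measurable
    simp_rw [sum_sq_fderiv_liftedFun (hC1.differentiable one_ne_zero)]
    rw [integral_liftedRegion hG hGm hv
      fun x hx => add_nonneg (mul_nonneg (hG hx).le (sq_nonneg _)) (sq_nonneg _)]
    ring
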